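/- arXiv:2301.01374 — 2 statements merged into one kernel-verified Lean document; each statement's English description precedes it below -/
import Mathlib

section
/- Let I ⊆ {1,…,n} with |I| = r be such that {v_i : i ∈ I} is a basis of ℝ^r, let k ∈ I, let j ∉ I, and set J = I ∪ {j}. Let (a_i)_{i∈J} be any nonzero tuple of real numbers with ∑_{i∈J} a_i v_i = 0, and let μ : ℝ^r → ℝ be the unique linear function with μ(v_k) = Vol_I and μ(v_i) = 0 for all i ∈ I ∖ {k}. Then μ(v_j) = − sign(a_k) · sign(a_j) · Vol_{J∖{k}}, where sign : ℝ → {−1,0,1} is the usual sign function. -/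
/-
Since `(v_i)_{i ∈ I}` is independent, `a_j ≠ 0`, and solving the relation gives
`v_j = ∑_{i ∈ I} c_i v_i` with `c_i = -a_i / a_j`; hence `μ(v_j) = c_k Vol_I`. Replacing the row
`v_k` by `v_j` in the matrix of `I` gives the matrix of `J ∖ {k}` and multiplies its determinant
by `c_k`, so `Vol_{J ∖ {k}} = |c_k| Vol_I`. The claim follows from
`sign(a_k) sign(a_j) |a_k / a_j| = a_k / a_j`.
-/

open scoped BigOperators Classical

noncomputable section

namespace BBGKZ

/-- The real vector corresponding to the `i`-th integer vector `v i`. -/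
def vR {r n : ℕ} (v : Fin n → Fin r → ℤ) (i : Fin n) : Fin r → ℝ := fun j => (v i j : ℝ)

/-- The complex vector corresponding to the `i`-th integer vector `v i`. -/
def vC {r n : ℕ} (v : Fin n → Fin r → ℤ) (i : Fin n) : Fin r → ℂ := fun j => (v i j : ℂ)

/-- The real vector corresponding to an integer vector. -/
def intVec {r : ℕ} (c : Fin r → ℤ) : Fin r → ℝ := fun j => (c j : ℝ)

/-- The complex vector corresponding to an integer vector. -/
def intVecC {r : ℕ} (c : Fin r → ℤ) : Fin r → ℂ := fun j => (c j : ℂ)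

/-- The cone `C = ∑ ℝ_{≥0} v_i`. -/
def coneC {r n : ℕ} (v : Fin n → Fin r → ℤ) : Set (Fin r → ℝ) :=
  {x | ∃ t : Fin n → ℝ, (∀ i, 0 ≤ t i) ∧ x = ∑ i, t i • vR v i}

/-- The cone `σ_I = ∑_{i ∈ I} ℝ_{≥0} v_i`. -/
def sigmaCone {r n : ℕ} (v : Fin n → Fin r → ℤ) (I : Finset (Fin n)) : Set (Fin r → ℝ) :=
  {x | ∃ t : Fin n → ℝ, (∀ i, 0 ≤ t i) ∧ (∀ i, i ∉ I → t i = 0) ∧ x = ∑ i, t i • vR v i}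

/-- `v_I = ∑_{i ∈ I} v_i`. -/
def vSum {r n : ℕ} (v : Fin n → Fin r → ℤ) (I : Finset (Fin n)) : Fin r → ℤ := ∑ i ∈ I, v i

/-- `Vol_I`: the absolute value of the determinant of the `r × r` matrix whose rows are the
vectors `v i`, `i ∈ I` (defined when `I.card = r`, and `0` otherwise). -/
def Vol {r n : ℕ} (v : Fin n → Fin r → ℤ) (I : Finset (Fin n)) : ℝ :=
  if h : I.card = r then
    |(Matrix.of fun a b : Fin r => vR v (I.orderIsoOfFin h a).1 b).det| else 0

/-- A vector of `ℝ^r` is generic if it lies in no proper linear subspace spanned by integer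
vectors. -/
def GenericVec {r : ℕ} (w : Fin r → ℝ) : Prop :=
  ∀ T : Set (Fin r → ℤ), Submodule.span ℝ (intVec '' T) ≠ ⊤ → w ∉ Submodule.span ℝ (intVec '' T)

/-- The value at `β ∈ ℂ^r` of the `ℂ`-linear extension of `μ : ℝ^r → ℝ`. -/
def muC {r : ℕ} (μ : (Fin r → ℝ) →ₗ[ℝ] ℝ) (β : Fin r → ℂ) : ℂ :=
  ∑ j, β j * (μ (Pi.single j 1) : ℂ)

/-- A solution of `bbGKZ(S, 0)` on `U`, where `S` is `C` or `C°`. -/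
def IsSol0 {r n : ℕ} (v : Fin n → Fin r → ℤ) (S : Set (Fin r → ℝ))
    (U : Set (Fin n → ℂ)) (Φ : (Fin r → ℤ) → (Fin n → ℂ) → ℂ) : Prop :=
  (∀ c : Fin r → ℤ, intVec c ∈ S → DifferentiableOn ℂ (Φ c) U) ∧
  (∀ c : Fin r → ℤ, intVec c ∈ S → ∀ i : Fin n, ∀ x ∈ U,
      fderiv ℂ (Φ c) x (Pi.single i 1) = Φ (c + v i) x) ∧
  (∀ c : Fin r → ℤ, intVec c ∈ S → ∀ μ : (Fin r → ℝ) →ₗ[ℝ] ℝ, ∀ x ∈ U,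
      (∑ i, (μ (vR v i) : ℂ) * x i * fderiv ℂ (Φ c) x (Pi.single i 1))
        + (μ (intVec c) : ℂ) * Φ c x = 0)

/-- A solution of `bbGKZ(S, β)` on `U`. -/
def IsSolBeta {r n : ℕ} (v : Fin n → Fin r → ℤ) (S : Set (Fin r → ℝ)) (β : Fin r → ℂ)
    (U : Set (Fin n → ℂ)) (Φ : (Fin r → ℤ) → (Fin n → ℂ) → ℂ) : Prop :=
  (∀ c : Fin r → ℤ, intVec c ∈ S → DifferentiableOn ℂ (Φ c) U) ∧
  (∀ c : Fin r → ℤ, intVec c ∈ S → ∀ i : Fin n, ∀ x ∈ U,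
      fderiv ℂ (Φ c) x (Pi.single i 1) = Φ (c + v i) x) ∧
  (∀ c : Fin r → ℤ, intVec c ∈ S → ∀ μ : (Fin r → ℝ) →ₗ[ℝ] ℝ, ∀ x ∈ U,
      (∑ i, (μ (vR v i) : ℂ) * x i * fderiv ℂ (Φ c) x (Pi.single i 1))
        + ((μ (intVec c) : ℂ) - muC μ β) * Φ c x = 0)

/-- The coefficients `ξ_{c,d,I}` determined by a generic vector `v0 ∈ C°`:
`ξ_{c,d,I} = (-1)^{deg c}` if `σ_I` is `r`-dimensional and for all sufficiently small `ε > 0`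
both `c + ε v0` and `d - ε v0` lie in the interior of `σ_I`, and `0` otherwise. -/
def xiCoef {r n : ℕ} (v : Fin n → Fin r → ℤ) (degZ : (Fin r → ℤ) → ℤ) (v0 : Fin r → ℝ)
    (c d : Fin r → ℤ) (I : Finset (Fin n)) : ℂ :=
  if intVec c ∈ coneC v ∧ intVec d ∈ interior (coneC v) ∧ c + d = vSum v I ∧ I.card = r ∧
      Submodule.span ℝ (vR v '' (I : Set (Fin n))) = ⊤ ∧
      (∀ᶠ ε in nhdsWithin (0 : ℝ) (Set.Ioi 0),
        intVec c + ε • v0 ∈ interior (sigmaCone v I) ∧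
        intVec d - ε • v0 ∈ interior (sigmaCone v I))
  then (-1 : ℂ) ^ (degZ c) else 0

/-- The pairing `⟨Φ, Ψ⟩ = ∑_{c,d,I} ξ_{c,d,I} Vol_I (∏_{i∈I} x_i) Φ_c Ψ_d`, where the
(finitely supported) inner sum is over lattice points `c ∈ C`, `d ∈ C°` with `c + d = v_I`. -/
def pairingXi {r n : ℕ} (v : Fin n → Fin r → ℤ)
    (ξ : (Fin r → ℤ) → (Fin r → ℤ) → Finset (Fin n) → ℂ)
    (Φ Ψ : (Fin r → ℤ) → (Fin n → ℂ) → ℂ) (x : Fin n → ℂ) : ℂ :=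
  ∑ I ∈ Finset.powersetCard r (Finset.univ : Finset (Fin n)),
    ∑ᶠ c : Fin r → ℤ,
      (if intVec c ∈ coneC v ∧ intVec (vSum v I - c) ∈ interior (coneC v) then
        ξ c (vSum v I - c) I * (Vol v I : ℂ) * (∏ i ∈ I, x i) * Φ c x * Ψ (vSum v I - c) x
      else 0)

/-- A finite simplicial fan supported on `C` with rays among the `v_i`, encoded by the finite
family of index sets of its cones. -/
structure IsFan {r n : ℕ} (v : Fin n → Fin r → ℤ) (Fam : Finset (Finset (Fin n))) : Prop where
  indep : ∀ I ∈ Fam, LinearIndependent ℝ (fun i : {x : Fin n // x ∈ I} => vR v i.1)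
  downward : ∀ I ∈ Fam, ∀ J : Finset (Fin n), J ⊆ I → J ∈ Fam
  inter : ∀ I ∈ Fam, ∀ J ∈ Fam, ∃ K ∈ Fam, K ⊆ I ∧ K ⊆ J ∧
    sigmaCone v I ∩ sigmaCone v J = sigmaCone v K
  max_cones : ∀ I ∈ Fam, ∃ J ∈ Fam, I ⊆ J ∧ J.card = r
  union_eq : (⋃ I ∈ (Fam : Set (Finset (Fin n))), sigmaCone v I) = coneC v

/-- `ψ` is strictly `Σ`-convex. -/
def StrictSigmaConvex {r n : ℕ} (v : Fin n → Fin r → ℤ) (Fam : Finset (Finset (Fin n)))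
    (ψ : (Fin r → ℝ) → ℝ) : Prop :=
  ∀ I ∈ Fam, I.card = r → ∃ ℓ : (Fin r → ℝ) →ₗ[ℝ] ℝ,
    (∀ x ∈ sigmaCone v I, ψ x = ℓ x) ∧ (∀ x ∈ coneC v, x ∉ sigmaCone v I → ℓ x < ψ x)

/-- The minimal cone of the fan containing a given point. -/
def IsMinConeOf {r n : ℕ} (v : Fin n → Fin r → ℤ) (Fam : Finset (Finset (Fin n)))
    (K : Finset (Fin n)) (w : Fin r → ℝ) : Prop :=
  K ∈ Fam ∧ w ∈ sigmaCone v K ∧ ∀ K' ∈ Fam, w ∈ sigmaCone v K' → K ⊆ K'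

/-- The cone `C_Σ` of the secondary fan corresponding to `Σ`. -/
def CSigma {r n : ℕ} (v : Fin n → Fin r → ℤ) (Fam : Finset (Finset (Fin n))) :
    Set (Fin n → ℝ) :=
  {η | ∀ I ∈ Fam, I.card = r → ∀ ℓ : (Fin r → ℝ) →ₗ[ℝ] ℝ,
    (∀ i ∈ I, ℓ (vR v i) = η i) → ∀ j, ℓ (vR v j) ≤ η j}

/-- The index set `L_{c,γ,σ;β}` of the Γ-series. -/
def Lset {r n : ℕ} (v : Fin n → Fin r → ℤ) (I0 : Finset (Fin n)) (β : Fin r → ℂ)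
    (c γ : Fin r → ℤ) : Set (Fin n → ℂ) :=
  {l | (∑ i, l i • vC v i) = β - intVecC c
    ∧ (∀ i ∉ I0, ∃ m : ℤ, l i = (m : ℂ))
    ∧ (∃ m : Fin n → ℤ,
        intVecC c + ∑ i ∈ I0ᶜ, l i • vC v i = -intVecC γ + ∑ i ∈ I0, (m i : ℂ) • vC v i)}

/-- An individual term `∏_i exp(l_i Log x_i)/Γ(1 + l_i)` of the Γ-series.  (Mathlib's
`Complex.Gamma` vanishes at the poles of `Γ`, so `1/Γ` is `0` there.) -/
def gammaTerm {n : ℕ} (l x : Fin n → ℂ) : ℂ :=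
  ∏ i, Complex.exp (l i * Complex.log (x i)) / Complex.Gamma (1 + l i)

/-- The region `R(ψ̂)`. -/
def Rregion {r n : ℕ} (v : Fin n → Fin r → ℤ) (Fam : Finset (Finset (Fin n)))
    (ψh : Fin n → ℝ) : Set (Fin n → ℂ) :=
  {x | (∀ i, x i ≠ 0 ∧ |Complex.arg (x i)| < Real.pi) ∧
    (fun i => -Real.log ‖x i‖ - ψh i) ∈ CSigma v Fam}

/-- The Γ-series `Φ^{γ,σ}_c` with parameter `β`. -/
def GammaSeries {r n : ℕ} (v : Fin n → Fin r → ℤ) (I0 : Finset (Fin n)) (β : Fin r → ℂ)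
    (γ c : Fin r → ℤ) (x : Fin n → ℂ) : ℂ :=
  ∑' l : (Lset v I0 β c γ), gammaTerm (l : Fin n → ℂ) x

/-- Absolute and uniform-on-compacts convergence of the Γ-series on a set `S`:
for every compact `K ⊆ S`, `∑_{l ∈ L} sup_{x ∈ K} |term_l(x)| < ∞`. -/
def ConvergesOn {r n : ℕ} (v : Fin n → Fin r → ℤ) (I0 : Finset (Fin n)) (β : Fin r → ℂ)
    (γ c : Fin r → ℤ) (S : Set (Fin n → ℂ)) : Prop :=
  ∀ K ⊆ S, IsCompact K →
    Summable (fun l : (Lset v I0 β c γ) =>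
      sSup ((fun x => ‖gammaTerm (l : Fin n → ℂ) x‖) '' K))

/-- `β ∈ ℂ^r` is generic: it lies in no proper affine subspace of `ℂ^r` defined over `ℚ`. -/
def GenericBeta {r : ℕ} (β : Fin r → ℂ) : Prop :=
  ∀ q : Fin r → ℚ, q ≠ 0 → ∀ q0 : ℚ, (∑ j, (q j : ℂ) * β j) ≠ (q0 : ℂ)

theorem _root_.Real.sign_mul_sign_mul_abs_div (x y : ℝ) :
    Real.sign x * Real.sign y * |x / y| = x / y := by
  rw [abs_div]
  rcases lt_trichotomy x 0 with hx | rfl | hx <;> rcases lt_trichotomy y 0 with hy | rfl | hy <;>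
    simp [Real.sign_of_neg, Real.sign_of_pos, abs_of_neg, abs_of_pos, *, neg_div, div_neg]

section LinearRelation

variable {ι K M : Type*} [DecidableEq ι] {w : ι → M} {I : Finset ι} {j : ι} {a : ι → K}

theorem _root_.coeff_ne_zero_of_sum_insert_eq_zero [Ring K] [AddCommGroup M] [Module K M]
    (hI : LinearIndependent K (fun i : I => w i)) (hj : j ∉ I)
    (ha0 : ∃ i ∈ insert j I, a i ≠ 0) (ha : ∑ i ∈ insert j I, a i • w i = 0) : a j ≠ 0 := by
  intro haj
  rw [Finset.sum_insert hj, haj, zero_smul, zero_add, ← Finset.sum_coe_sort] at ha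
  have hzero := Fintype.linearIndependent_iff.mp hI (fun i => a i) ha
  obtain ⟨i, hi, hai⟩ := ha0
  rcases Finset.mem_insert.mp hi with rfl | hiI
  · exact hai haj
  · exact hai (hzero ⟨i, hiI⟩)

theorem _root_.eq_sum_of_sum_insert_eq_zero [Field K] [AddCommGroup M] [Module K M]
    (hj : j ∉ I) (haj : a j ≠ 0) (ha : ∑ i ∈ insert j I, a i • w i = 0) :
    w j = ∑ i ∈ I, (-(a i / a j)) • w i := by
  rw [Finset.sum_insert hj, add_eq_zero_iff_eq_neg] at ha
  calc w j = (a j)⁻¹ • (a j • w j) := by rw [smul_smul, inv_mul_cancel₀ haj, one_smul]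
    _ = ∑ i ∈ I, (-(a i / a j)) • w i := by
      simp only [ha, Finset.smul_sum, smul_smul, ← Finset.sum_neg_distrib, ← neg_smul,
        div_eq_inv_mul, mul_neg]

end LinearRelation

section Volume

variable {r n : ℕ} (v : Fin n → Fin r → ℤ) {I : Finset (Fin n)}

theorem Vol_eq_abs_det_of_injective (hI : I.card = r) {g : Fin r → Fin n}
    (hg : Function.Injective g) (hgI : ∀ q, g q ∈ I) :
    Vol v I = |(Matrix.of fun a b => vR v (g a) b).det| := by
  set e := I.orderIsoOfFin hI
  have hσ : Function.Injective fun q => e.symm ⟨g q, hgI q⟩ :=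
    fun x y h => hg (congrArg Subtype.val (e.symm.injective h))
  let σ : Fin r ≃ Fin r := Equiv.ofBijective _ hσ.bijective_of_finite
  have hrows : (Matrix.of fun a b => vR v (g a) b) =
      (Matrix.of fun a b => vR v (e a).1 b).submatrix σ (Equiv.refl _) := by
    ext a b
    simp [σ]
  rw [Vol, dif_pos hI, hrows, Matrix.abs_det_submatrix_equiv_equiv]

theorem Vol_insert_erase (hI : I.card = r) {k j : Fin n} (hk : k ∈ I) (hj : j ∉ I)
    (c : Fin n → ℝ) (hc : vR v j = ∑ i ∈ I, c i • vR v i) :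
    Vol v ((insert j I).erase k) = |c k| * Vol v I := by
  set e := I.orderIsoOfFin hI
  set p := e.symm ⟨k, hk⟩
  set g : Fin r → Fin n := fun q => (e q).1
  have hg : Function.Injective g := fun x y h => e.injective (Subtype.ext h)
  have hgp : g p = k := by simp [g, p]
  have hg' : Function.Injective (Function.update g p j) := by
    have hgj : ∀ q, g q ≠ j := fun q h => hj (h ▸ (e q).2)
    intro x y hxy
    rcases eq_or_ne x p with rfl | hx <;> rcases eq_or_ne y p with rfl | hy
    · rfl
    · exact absurd (by simpa [hy] using hxy.symm) (hgj y)
    · exact absurd (by simpa [hx] using hxy) (hgj x)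
    · exact hg (by simpa [hx, hy] using hxy)
  have hg'I : ∀ q, Function.update g p j q ∈ (insert j I).erase k := by
    intro q
    rcases eq_or_ne q p with rfl | hq
    · simp only [Function.update_self]
      exact Finset.mem_erase.mpr ⟨fun h => hj (h ▸ hk), Finset.mem_insert_self j I⟩
    · rw [Function.update_of_ne hq, ← hgp]
      exact Finset.mem_erase.mpr ⟨hg.ne hq, Finset.mem_insert_of_mem (e q).2⟩
  have hI' : ((insert j I).erase k).card = r := by
    rw [Finset.card_erase_of_mem (Finset.mem_insert_of_mem hk), Finset.card_insert_of_notMem hj,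
      hI, Nat.add_sub_cancel]
  set A : Matrix (Fin r) (Fin r) ℝ := Matrix.of fun a b => vR v (g a) b
  have hrow : vR v j = ∑ q, (c ∘ g) q • A q := by
    rw [hc, ← Finset.sum_coe_sort I, ← e.toEquiv.sum_comp]
    rfl
  have hA' : (Matrix.of fun a b => vR v (Function.update g p j a) b) =
      A.updateRow p (∑ q, (c ∘ g) q • A q) := by
    ext a b
    rcases eq_or_ne a p with rfl | ha
    · simp only [Matrix.updateRow_self, Matrix.of_apply, Function.update_self, hrow]
    · simp [ha, A]
  rw [Vol_eq_abs_det_of_injective v hI' hg' hg'I,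
    Vol_eq_abs_det_of_injective v hI hg (fun q => (e q).2), hA', Matrix.det_updateRow_sum, smul_eq_mul, abs_mul, Function.comp_apply, hgp]

end Volume

theorem statement0_general
    (r n : ℕ)
    (v : Fin n → Fin r → ℤ)
    (I : Finset (Fin n)) (hI : I.card = r)
    (hIindep : LinearIndependent ℝ (fun i : {x : Fin n // x ∈ I} => vR v i.1))
    (k : Fin n) (hk : k ∈ I) (j : Fin n) (hj : j ∉ I)
    (a : Fin n → ℝ) (ha0 : ∃ i ∈ insert j I, a i ≠ 0)
    (ha : ∑ i ∈ insert j I, a i • vR v i = 0)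
    (μ : (Fin r → ℝ) →ₗ[ℝ] ℝ)
    (hμk : μ (vR v k) = Vol v I)
    (hμ0 : ∀ i ∈ I, i ≠ k → μ (vR v i) = 0) :
    μ (vR v j) = - (Real.sign (a k) * Real.sign (a j) * Vol v ((insert j I).erase k)) := by
  have haj : a j ≠ 0 := coeff_ne_zero_of_sum_insert_eq_zero hIindep hj ha0 ha
  have hvj := eq_sum_of_sum_insert_eq_zero hj haj ha
  have hμj : μ (vR v j) = -(a k / a j) * Vol v I := by
    rw [hvj, map_sum, Finset.sum_eq_single_of_mem k hk fun i hi hik => by simp [hμ0 i hi hik],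
      map_smul, smul_eq_mul, hμk]
  rw [hμj, Vol_insert_erase v hI hk hj _ hvj, abs_neg, ← mul_assoc,
    Real.sign_mul_sign_mul_abs_div, neg_mul]

/-- Lemma on signs. -/
theorem statement0
    (r n : ℕ) (hr : 1 ≤ r) (hn : r ≤ n)
    (deg : (Fin r → ℝ) →ₗ[ℝ] ℝ)
    (hdegInt : ∀ m : Fin r → ℤ, ∃ k : ℤ, deg (intVec m) = (k : ℝ))
    (v : Fin n → Fin r → ℤ)
    (hv_inj : Function.Injective v)
    (hv_span : Submodule.span ℝ (Set.range (vR v)) = ⊤)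
    (hv_deg : ∀ i, deg (vR v i) = 1)
    (I : Finset (Fin n)) (hI : I.card = r)
    (hIindep : LinearIndependent ℝ (fun i : {x : Fin n // x ∈ I} => vR v i.1))
    (hIspan : Submodule.span ℝ (vR v '' (I : Set (Fin n))) = ⊤)
    (k : Fin n) (hk : k ∈ I) (j : Fin n) (hj : j ∉ I)
    (a : Fin n → ℝ) (ha0 : ∃ i ∈ insert j I, a i ≠ 0)
    (ha : ∑ i ∈ insert j I, a i • vR v i = 0)
    (μ : (Fin r → ℝ) →ₗ[ℝ] ℝ)
    (hμk : μ (vR v k) = Vol v I)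
    (hμ0 : ∀ i ∈ I, i ≠ k → μ (vR v i) = 0) :
    μ (vR v j) = - (Real.sign (a k) * Real.sign (a j) * Vol v ((insert j I).erase k)) :=
  statement0_general r n v I hI hIindep k hk j hj a ha0 ha μ hμk hμ0

end BBGKZ
end
end

section
/- Suppose ξ_{c,d,I} ∈ ℂ is given for every c ∈ C ∩ ℤ^r, d ∈ C° ∩ ℤ^r and I ⊆ {1,…,n} with |I| = r and c + d = v_I, and suppose that for every spanning subset J ⊆ {1,…,n}, every nonzero tuple (a_i)_{i∈J} with ∑_{i∈J} a_i v_i = 0, and all c ∈ C ∩ ℤ^r, d ∈ C° ∩ ℤ^r with c + d = v_J, one has 0 = ∑_{j∈J} sign(a_j) · ( ξ_{c−v_j, d, J∖{j}} · [c − v_j ∈ C] + ξ_{c, d−v_j, J∖{j}} · [d − v_j ∈ C°] ), where [·] denotes the indicator of the stated condition (a summand is read as 0 when its indicator vanishes). Then for every open connected U ⊆ (ℂ∖{0})^n and every pair of solutions Φ of bbGKZ(C,0) and Ψ of bbGKZ(C°,0) on U, the function x ↦ ∑_{I ⊆ {1,…,n}, |I| = r} ∑_{c ∈ C∩ℤ^r,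 d ∈ C°∩ℤ^r, c + d = v_I} ξ_{c,d,I} · Vol_I · (∏_{i∈I} x_i) · Φ_c(x) · Ψ_d(x) (a finite sum) is constant on U. -/
open scoped BigOperators Classical

noncomputable section

/-!
Let `F` be the pairing. Each term of `∂F/∂x_k` is `ξ_{c,d,I} Vol_I ∂_k(x^I Φ_c Ψ_d)`. If `k ∈ I` and
`(v_i)_{i ∈ I}` is a basis, let `μ` be the functional dual to `v_k`; then `μ(c + d) = μ(v_I) = 1`,
and the Euler equations of `Φ` and `Ψ` for `μ` turn `∂_k(x^I Φ_c Ψ_d)` into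
`-x^{I∖k} ∑_{i ∉ I} μ(v_i) x_i ∂_i(Φ_c Ψ_d)`. Hence `∂F/∂x_k` is a combination of the terms
`x^{J∖k} Φ_c Ψ_d` with `|J| = r + 1`, `k ∈ J` and `c + d = v_J`: set `J = I ∪ {i}` and shift `c` or
`d` by `v_i`. Let `∑_{i ∈ J} a_i v_i = 0` be the cofactor relation of `J`, so `|a_i| = Vol_{J∖i}`.
By Cramer's rule `Vol_{J∖i}` times the coefficient `-μ(v_i)` (or `1` when `i = k`) is
`a_k sign(a_i)`, so the coefficient of `x^{J∖k} Φ_c Ψ_d` is `a_k` times the right-hand side of the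
hypothesis on `ξ`, which vanishes. Thus `dF = 0` on the connected open set `U`.
-/

/-- Cofactor expansion of an `(r+1) × (r+1)` determinant with a repeated column. -/
lemma Matrix.sum_det_succAbove_smul_eq_zero {R : Type*} [CommRing R] {r : ℕ}
    (w : Fin (r + 1) → Fin r → R) :
    ∑ p : Fin (r + 1), ((-1) ^ (p : ℕ) * (Matrix.of fun a b => w (p.succAbove a) b).det) • w p
      = 0 := by
  funext j
  let A : Matrix (Fin (r + 1)) (Fin (r + 1)) R := Matrix.of fun p q => Fin.cases (w p j) (w p) q
  have hA : A.det = 0 :=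
    Matrix.det_zero_of_column_eq (Fin.succ_ne_zero j).symm fun p => by simp [A]
  rw [Matrix.det_succ_column_zero] at hA
  simpa [A, Finset.sum_apply, Matrix.submatrix, mul_right_comm] using hA

lemma Finset.sum_powersetCard_sum_compl {α M : Type*} [Fintype α] [DecidableEq α]
    [AddCommMonoid M] (r : ℕ) (f : Finset α → α → M) :
    ∑ I ∈ Finset.powersetCard r Finset.univ, ∑ i ∈ Iᶜ, f I i
      = ∑ J ∈ Finset.powersetCard (r + 1) Finset.univ, ∑ i ∈ J, f (J.erase i) i := by
  rw [Finset.sum_sigma', Finset.sum_sigma']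
  refine Finset.sum_nbij' (fun p => ⟨insert p.2 p.1, p.2⟩) (fun q => ⟨q.1.erase q.2, q.2⟩)
    ?_ ?_ ?_ ?_ ?_
  · rintro ⟨I, i⟩ h
    simp only [Finset.mem_sigma, Finset.mem_powersetCard, Finset.mem_compl] at h ⊢
    exact ⟨⟨Finset.subset_univ _, by rw [Finset.card_insert_of_notMem h.2, h.1.2]⟩,
      Finset.mem_insert_self _ _⟩
  · rintro ⟨J, i⟩ h
    simp only [Finset.mem_sigma, Finset.mem_powersetCard, Finset.mem_compl] at h ⊢
    exact ⟨⟨Finset.subset_univ _, by rw [Finset.card_erase_of_mem h.2, h.1.2]; rfl⟩,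
      Finset.notMem_erase _ _⟩
  · rintro ⟨I, i⟩ h
    simp only [Finset.mem_sigma, Finset.mem_compl] at h
    simp [Finset.erase_insert h.2]
  · rintro ⟨J, i⟩ h
    simp only [Finset.mem_sigma] at h
    simp [Finset.insert_erase h.2]
  · rintro ⟨I, i⟩ h
    simp only [Finset.mem_sigma, Finset.mem_compl] at h
    simp [Finset.erase_insert h.2]

lemma Finset.sum_comp_add_right_of_support_subset {G M : Type*} [AddCommGroup G]
    [AddCommMonoid M] {T : Finset G} {h : G → M} (a : G) (hT : ∀ c, h c ≠ 0 → c ∈ T)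
    (hTa : ∀ c, h c ≠ 0 → c - a ∈ T) : ∑ c ∈ T, h (c + a) = ∑ c ∈ T, h c := by
  rw [← finsum_eq_sum_of_support_subset h (fun c hc => hT c hc),
    ← finsum_eq_sum_of_support_subset (fun c => h (c + a))
      (fun c hc => by simpa using hTa _ hc)]
  exact finsum_comp_equiv (Equiv.addRight a)

lemma Real.abs_eq_sign_mul_self (a : ℝ) : |a| = Real.sign a * a := by
  rcases lt_trichotomy a 0 with h | rfl | h
  · simp [Real.sign_of_neg h, abs_of_neg h]
  · simp
  · simp [Real.sign_of_pos h, abs_of_pos h]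

lemma ContinuousLinearMap.eq_zero_of_apply_single_one {ι 𝕜 M : Type*} [Fintype ι]
    [DecidableEq ι] [NontriviallyNormedField 𝕜] [NormedAddCommGroup M] [NormedSpace 𝕜 M]
    {L : (ι → 𝕜) →L[𝕜] M} (h : ∀ k, L (Pi.single k 1) = 0) : L = 0 := by
  ext w
  rw [← Finset.univ_sum_single w, map_sum]
  refine Finset.sum_eq_zero fun k _ => ?_
  rw [← mul_one (w k), ← smul_eq_mul, Pi.single_smul', map_smul, h, smul_zero]

namespace BBGKZ

section Lattice

variable {r n : ℕ} {v : Fin n → Fin r → ℤ}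

lemma intVec_add (a b : Fin r → ℤ) : intVec (a + b) = intVec a + intVec b := by
  funext j; simp [intVec]

lemma intVec_sub (a b : Fin r → ℤ) : intVec (a - b) = intVec a - intVec b := by
  funext j; simp [intVec]

lemma intVec_vSum (v : Fin n → Fin r → ℤ) (I : Finset (Fin n)) :
    intVec (vSum v I) = ∑ i ∈ I, vR v i := by
  funext j; simp [intVec, vSum, vR, Finset.sum_apply]

lemma vSum_erase (v : Fin n → Fin r → ℤ) {J : Finset (Fin n)} {i : Fin n} (hi : i ∈ J) :
    vSum v (J.erase i) = vSum v J - v i :=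
  eq_sub_of_add_eq (Finset.sum_erase_add J v hi)

lemma deg_vSum {deg : (Fin r → ℝ) →ₗ[ℝ] ℝ} (hv_deg : ∀ i, deg (vR v i) = 1)
    (I : Finset (Fin n)) : deg (intVec (vSum v I)) = I.card := by
  simp [intVec_vSum, map_sum, hv_deg]

lemma vR_mem_coneC (i : Fin n) : vR v i ∈ coneC v :=
  ⟨Pi.single i 1, fun j => by by_cases h : j = i <;> simp [h], by simp [Pi.single_apply]⟩

lemma add_mem_coneC {x y : Fin r → ℝ} (hx : x ∈ coneC v) (hy : y ∈ coneC v) :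
    x + y ∈ coneC v := by
  obtain ⟨t, ht, rfl⟩ := hx
  obtain ⟨s, hs, rfl⟩ := hy
  exact ⟨t + s, fun i => add_nonneg (ht i) (hs i), by simp [add_smul, Finset.sum_add_distrib]⟩

lemma add_mem_interior_coneC {x y : Fin r → ℝ} (hx : x ∈ interior (coneC v))
    (hy : y ∈ coneC v) : x + y ∈ interior (coneC v) := by
  have hsub : (· + y) '' interior (coneC v) ⊆ coneC v := by
    rintro _ ⟨z, hz, rfl⟩
    exact add_mem_coneC (interior_subset hz) hy
  exact interior_maximal hsub ((isOpenMap_add_right y) _ isOpen_interior) ⟨x, hx, rfl⟩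

lemma intVec_sub_add_vR (c : Fin r → ℤ) (i : Fin n) : intVec (c - v i) + vR v i = intVec c := by
  rw [intVec_sub]; exact sub_add_cancel _ _

lemma mem_coneC_of_sub_mem {c : Fin r → ℤ} {i : Fin n} (h : intVec (c - v i) ∈ coneC v) :
    intVec c ∈ coneC v := by
  simpa only [intVec_sub_add_vR] using add_mem_coneC h (vR_mem_coneC i)

lemma mem_interior_coneC_of_sub_mem {d : Fin r → ℤ} {i : Fin n}
    (h : intVec (d - v i) ∈ interior (coneC v)) : intVec d ∈ interior (coneC v) := by
  simpa only [intVec_sub_add_vR] using add_mem_interior_coneC h (vR_mem_coneC i)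

end Lattice

section Box

variable {r n : ℕ} {v : Fin n → Fin r → ℤ} {deg : (Fin r → ℝ) →ₗ[ℝ] ℝ}

def coordBound (v : Fin n → Fin r → ℤ) : ℤ := ∑ i, ∑ j, |v i j|

lemma abs_le_coordBound (i : Fin n) (j : Fin r) : |v i j| ≤ coordBound v :=
  (Finset.single_le_sum (f := fun j => |v i j|) (fun _ _ => abs_nonneg _) (Finset.mem_univ j)).trans
    (Finset.single_le_sum (f := fun i => ∑ j, |v i j|)
      (fun _ _ => Finset.sum_nonneg fun _ _ => abs_nonneg _) (Finset.mem_univ i))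

lemma deg_nonneg_of_mem_coneC (hv_deg : ∀ i, deg (vR v i) = 1) {x : Fin r → ℝ}
    (hx : x ∈ coneC v) : 0 ≤ deg x := by
  obtain ⟨t, ht, rfl⟩ := hx
  simpa [map_sum, hv_deg] using Finset.sum_nonneg fun i _ => ht i

lemma abs_apply_le_deg_mul_of_mem_coneC (hv_deg : ∀ i, deg (vR v i) = 1)
    {x : Fin r → ℝ} (hx : x ∈ coneC v) (j : Fin r) : |x j| ≤ deg x * coordBound v := by
  obtain ⟨t, ht, rfl⟩ := hx
  have hdeg : deg (∑ i, t i • vR v i) = ∑ i, t i := by simp [map_sum, hv_deg]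
  rw [hdeg, Finset.sum_apply, Finset.sum_mul]
  refine (Finset.abs_sum_le_sum_abs _ _).trans (Finset.sum_le_sum fun i _ => ?_)
  rw [Pi.smul_apply, smul_eq_mul, abs_mul, abs_of_nonneg (ht i)]
  have hij : |vR v i j| ≤ coordBound v := by
    simpa only [vR, ← Int.cast_abs] using Int.cast_le.mpr (abs_le_coordBound (v := v) i j)
  exact mul_le_mul_of_nonneg_left hij (ht i)

def latticeBox (v : Fin n → Fin r → ℤ) (m : ℕ) : Finset (Fin r → ℤ) :=
  Finset.Icc (fun _ => -(m * coordBound v)) (fun _ => m * coordBound v)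

lemma mem_latticeBox (hv_deg : ∀ i, deg (vR v i) = 1) {m : ℕ} {I : Finset (Fin n)}
    {c : Fin r → ℤ} (hc : intVec c ∈ coneC v) (hd : intVec (vSum v I - c) ∈ coneC v)
    (hI : I.card ≤ m) : c ∈ latticeBox v m := by
  have hdeg : deg (intVec c) ≤ m := by
    have h := deg_vSum hv_deg I
    rw [← add_sub_cancel c (vSum v I), intVec_add, map_add] at h
    linarith [deg_nonneg_of_mem_coneC hv_deg hd, (Nat.cast_le (α := ℝ)).mpr hI]
  have hM : (0 : ℝ) ≤ coordBound v := by
    exact_mod_cast Finset.sum_nonneg fun i _ => Finset.sum_nonneg fun j _ => abs_nonneg (v i j)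
  have hbound (j : Fin r) : |c j| ≤ m * coordBound v := by
    have := (abs_apply_le_deg_mul_of_mem_coneC hv_deg hc j).trans
      (mul_le_mul_of_nonneg_right hdeg hM)
    simp only [intVec, ← Int.cast_abs] at this
    exact_mod_cast this
  simp only [latticeBox, Finset.mem_Icc, Pi.le_def]
  exact ⟨fun j => neg_le_of_abs_le (hbound j), fun j => le_of_abs_le (hbound j)⟩

end Box

section Volume

variable {r n : ℕ} {v : Fin n → Fin r → ℤ} {I : Finset (Fin n)}

lemma card_eq_of_Vol_ne_zero (h : Vol v I ≠ 0) : I.card = r := by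
  by_contra hc
  exact h (dif_neg hc)

lemma linearIndependent_of_Vol_ne_zero (h : Vol v I ≠ 0) :
    LinearIndependent ℝ (fun i : I => vR v i) := by
  have hc := card_eq_of_Vol_ne_zero h
  have hdet : (Matrix.of fun a b : Fin r => vR v (I.orderIsoOfFin hc a).1 b).det ≠ 0 := by
    simpa [Vol, hc] using h
  have hrows : (fun i : I => vR v i) = (fun a => Matrix.of (fun a b : Fin r =>
      vR v (I.orderIsoOfFin hc a).1 b) a) ∘ (I.orderIsoOfFin hc).symm := by
    funext i b
    simp only [Function.comp_apply, Matrix.of_apply, OrderIso.apply_symm_apply]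
  rw [hrows]
  exact (Matrix.linearIndependent_rows_of_det_ne_zero hdet).comp _
    (I.orderIsoOfFin hc).symm.injective

lemma span_range_eq_top_of_Vol_ne_zero (h : Vol v I ≠ 0) :
    Submodule.span ℝ (Set.range fun i : I => vR v i) = ⊤ :=
  (linearIndependent_of_Vol_ne_zero h).span_eq_top_of_card_eq_finrank'
    (by simp [card_eq_of_Vol_ne_zero h])

def basisOfVolNeZero (h : Vol v I ≠ 0) : Module.Basis I ℝ (Fin r → ℝ) :=
  .mk (linearIndependent_of_Vol_ne_zero h) (span_range_eq_top_of_Vol_ne_zero h).ge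

variable (v) in
/-- The functional dual to `v_k` in the basis `(v_i)_{i ∈ I}`; it is `0` when `Vol_I = 0` or
`k ∉ I`. -/
def dualCoord (I : Finset (Fin n)) (k : Fin n) : (Fin r → ℝ) →ₗ[ℝ] ℝ :=
  if h : Vol v I ≠ 0 ∧ k ∈ I then (basisOfVolNeZero h.1).coord ⟨k, h.2⟩ else 0

lemma dualCoord_vR (h : Vol v I ≠ 0) {i k : Fin n} (hk : k ∈ I) (hi : i ∈ I) :
    dualCoord v I k (vR v i) = if i = k then 1 else 0 := by
  have hb : vR v i = basisOfVolNeZero h ⟨i, hi⟩ := by simp [basisOfVolNeZero]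
  rw [dualCoord, dif_pos ⟨h, hk⟩, hb, Module.Basis.coord_apply, Module.Basis.repr_self,
    Finsupp.single_apply]
  simp [Subtype.ext_iff]

lemma Vol_eq_abs_det (hI : I.card = r) {f : Fin r → Fin n} (hf : Function.Injective f)
    (hfI : ∀ a, f a ∈ I) : Vol v I = |(Matrix.of fun a b => vR v (f a) b).det| := by
  set e := I.orderIsoOfFin hI
  let σ : Equiv.Perm (Fin r) := Equiv.ofBijective (fun a => e.symm ⟨f a, hfI a⟩)
    (Finite.injective_iff_bijective.mp fun a a' h => hf (by simpa using h))
  have hrows : (Matrix.of fun a b => vR v (f a) b)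
      = (Matrix.of fun a b => vR v (e a).1 b).submatrix σ id := by
    ext a b; simp [σ]
  rw [Vol, dif_pos hI, hrows, Matrix.det_permute, abs_mul]
  rcases Int.units_eq_one_or (Equiv.Perm.sign σ) with hs | hs <;>
    simp only [hs, Units.val_one, Units.val_neg, Int.cast_one, Int.cast_neg, abs_neg, abs_one,
      one_mul] <;> rfl

lemma exists_relation_abs_eq_Vol_erase (v : Fin n → Fin r → ℤ) {J : Finset (Fin n)}
    (hJ : J.card = r + 1) :
    ∃ a : Fin n → ℝ, (∀ i ∈ J, |a i| = Vol v (J.erase i)) ∧ ∑ i ∈ J, a i • vR v i = 0 := by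
  set e := J.orderIsoOfFin hJ
  let b : Fin (r + 1) → ℝ := fun p =>
    (-1) ^ (p : ℕ) * (Matrix.of fun a c => vR v (e (p.succAbove a)) c).det
  refine ⟨fun i => if h : i ∈ J then b (e.symm ⟨i, h⟩) else 0, fun i hi => ?_, ?_⟩
  · obtain ⟨p, rfl⟩ : ∃ p, (e p : Fin n) = i := ⟨e.symm ⟨i, hi⟩, by simp⟩
    have hcard : (J.erase (e p)).card = r := by simp [Finset.card_erase_of_mem, hJ]
    rw [Vol_eq_abs_det hcard (f := fun a => e (p.succAbove a))
      (fun a a' h => Fin.succAbove_right_injective (e.injective (Subtype.ext h)))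
      (fun a => Finset.mem_erase.mpr ⟨fun h => Fin.succAbove_ne p a (e.injective (Subtype.ext h)),
        (e _).2⟩)]
    simp [b, abs_mul]
  · rw [← Finset.sum_coe_sort J, ← e.toEquiv.sum_comp]
    simpa [b] using Matrix.sum_det_succAbove_smul_eq_zero fun p => vR v (e p)

end Volume

section Algebra

variable {r n : ℕ} (v : Fin n → Fin r → ℤ)

def XiRelation (ξ : (Fin r → ℤ) → (Fin r → ℤ) → Finset (Fin n) → ℂ) : Prop :=
  ∀ J : Finset (Fin n), J.card = r + 1 →
    Submodule.span ℝ (vR v '' (J : Set (Fin n))) = ⊤ →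
    ∀ a : Fin n → ℝ, (∃ i ∈ J, a i ≠ 0) → (∑ i ∈ J, a i • vR v i = 0) →
    ∀ c d : Fin r → ℤ, intVec c ∈ coneC v → intVec d ∈ interior (coneC v) →
      c + d = vSum v J →
      0 = ∑ j ∈ J, (Real.sign (a j) : ℂ) *
        ((if intVec (c - v j) ∈ coneC v then ξ (c - v j) d (J.erase j) else 0) +
         (if intVec (d - v j) ∈ interior (coneC v) then ξ c (d - v j) (J.erase j) else 0))

/-- The Euler equations of `bbGKZ(S, 0)` for the values `P c = Φ_c(x)` at one point `x`, with
`x_i ∂_i Φ_c` already replaced by `x_i Φ_{c + v_i}`. -/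
def EulerAt (S : Set (Fin r → ℝ)) (x : Fin n → ℂ) (P : (Fin r → ℤ) → ℂ) : Prop :=
  ∀ c, intVec c ∈ S → ∀ μ : (Fin r → ℝ) →ₗ[ℝ] ℝ,
    ∑ i, (μ (vR v i) : ℂ) * x i * P (c + v i) + (μ (intVec c) : ℂ) * P c = 0

/-- `∂_i (Φ_c Ψ_d) = Φ_{c+v_i} Ψ_d + Φ_c Ψ_{d+v_i}`, with `a = v_i`. -/
def leibniz {r : ℕ} (P Q : (Fin r → ℤ) → ℂ) (a c d : Fin r → ℤ) : ℂ :=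
  P (c + a) * Q d + P c * Q (d + a)

/-- `∂_k ((∏_{i∈I} x_i) Φ_c Ψ_d)`. -/
def partialTerm (x : Fin n → ℂ) (P Q : (Fin r → ℤ) → ℂ) (k : Fin n) (I : Finset (Fin n))
    (c d : Fin r → ℤ) : ℂ :=
  (if k ∈ I then ∏ j ∈ I.erase k, x j else 0) * (P c * Q d)
    + (∏ i ∈ I, x i) * leibniz P Q (v k) c d

def xiWeight (ξ : (Fin r → ℤ) → (Fin r → ℤ) → Finset (Fin n) → ℂ) (I : Finset (Fin n))
    (c : Fin r → ℤ) : ℂ :=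
  if intVec c ∈ coneC v ∧ intVec (vSum v I - c) ∈ interior (coneC v) then
    ξ c (vSum v I - c) I else 0

def relWeight (I : Finset (Fin n)) (k i : Fin n) : ℝ :=
  Vol v I * if i = k then 1 else -dualCoord v I k (vR v i)

variable {v}

lemma EulerAt.sum_leibniz {x : Fin n → ℂ} {P Q : (Fin r → ℤ) → ℂ} {S S' : Set (Fin r → ℝ)}
    (hP : EulerAt v S x P) (hQ : EulerAt v S' x Q) {c d : Fin r → ℤ} (hc : intVec c ∈ S)
    (hd : intVec d ∈ S') (μ : (Fin r → ℝ) →ₗ[ℝ] ℝ) :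
    ∑ i, (μ (vR v i) : ℂ) * x i * leibniz P Q (v i) c d
      + (μ (intVec (c + d)) : ℂ) * (P c * Q d) = 0 := by
  have hsplit : ∑ i, (μ (vR v i) : ℂ) * x i * leibniz P Q (v i) c d
      = (∑ i, (μ (vR v i) : ℂ) * x i * P (c + v i)) * Q d
        + P c * ∑ i, (μ (vR v i) : ℂ) * x i * Q (d + v i) := by
    simp only [leibniz, Finset.sum_mul, Finset.mul_sum, ← Finset.sum_add_distrib]
    exact Finset.sum_congr rfl fun i _ => by ring
  rw [hsplit, intVec_add, map_add, Complex.ofReal_add]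
  linear_combination Q d * hP c hc μ + P c * hQ d hd μ

lemma Vol_mul_partialTerm_eq {x : Fin n → ℂ} {P Q : (Fin r → ℤ) → ℂ}
    (hP : EulerAt v (coneC v) x P) (hQ : EulerAt v (interior (coneC v)) x Q) (k : Fin n)
    {I : Finset (Fin n)} {c d : Fin r → ℤ} (hc : intVec c ∈ coneC v)
    (hd : intVec d ∈ interior (coneC v)) (hcd : c + d = vSum v I) :
    (Vol v I : ℂ) * partialTerm v x P Q k I c d
      = ∑ i ∈ Iᶜ, if k ∈ insert i I then
          (relWeight v I k i : ℂ) * (∏ j ∈ (insert i I).erase k, x j) * leibniz P Q (v i) c d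
        else 0 := by
  by_cases hvol : Vol v I = 0
  · simp [hvol, relWeight]
  by_cases hk : k ∈ I
  case neg =>
    rw [Finset.sum_eq_single_of_mem k (Finset.mem_compl.mpr hk) fun i _ hik => if_neg (by
      simpa [Finset.mem_insert, hk] using Ne.symm hik)]
    simp [partialTerm, relWeight, hk, Finset.erase_insert hk, mul_assoc]
  set μ := dualCoord v I k
  have hμ (i : Fin n) (hi : i ∈ I) : μ (vR v i) = if i = k then 1 else 0 :=
    dualCoord_vR hvol hk hi
  have hμI : μ (intVec (c + d)) = 1 := by
    rw [hcd, intVec_vSum, map_sum, Finset.sum_congr rfl hμ, Finset.sum_ite_eq' I k, if_pos hk]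
  have hIsum : ∑ i ∈ I, (μ (vR v i) : ℂ) * x i * leibniz P Q (v i) c d
      = x k * leibniz P Q (v k) c d := by
    rw [Finset.sum_eq_single_of_mem k hk fun i hi hik => by simp [hμ i hi, hik], hμ k hk,
      if_pos rfl, Complex.ofReal_one, one_mul]
  have hE := hP.sum_leibniz hQ hc hd μ
  rw [hμI, ← Finset.sum_add_sum_compl I, hIsum, Complex.ofReal_one, one_mul] at hE
  have hrw (i : Fin n) (hi : i ∈ Iᶜ) : (if k ∈ insert i I then
      (relWeight v I k i : ℂ) * (∏ j ∈ (insert i I).erase k, x j) * leibniz P Q (v i) c d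
      else 0)
      = -(Vol v I : ℂ) * (∏ j ∈ I.erase k, x j)
          * ((μ (vR v i) : ℂ) * x i * leibniz P Q (v i) c d) := by
    have hik : i ≠ k := fun h => Finset.mem_compl.mp hi (h ▸ hk)
    have hiI : i ∉ I.erase k := fun h => Finset.mem_compl.mp hi (Finset.mem_of_mem_erase h)
    rw [if_pos (Finset.mem_insert_of_mem hk), relWeight, if_neg hik, Finset.erase_insert_of_ne hik,
      Finset.prod_insert hiI]
    push_cast
    ring
  rw [Finset.sum_congr rfl hrw, ← Finset.mul_sum, partialTerm, if_pos hk,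
    ← Finset.mul_prod_erase I x hk]
  linear_combination ((Vol v I : ℂ) * ∏ j ∈ I.erase k, x j) * hE

end Algebra

section Cancellation

variable {r n : ℕ} {v : Fin n → Fin r → ℤ}
  {ξ : (Fin r → ℤ) → (Fin r → ℤ) → Finset (Fin n) → ℂ}

lemma mem_of_xiWeight_ne_zero {I : Finset (Fin n)} {c : Fin r → ℤ}
    (h : xiWeight v ξ I c ≠ 0) :
    intVec c ∈ coneC v ∧ intVec (vSum v I - c) ∈ interior (coneC v) := by
  by_contra hc
  exact h (if_neg hc)

lemma xiWeight_erase_sub {J : Finset (Fin n)} {i : Fin n} (hi : i ∈ J) (c : Fin r → ℤ) :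
    xiWeight v ξ (J.erase i) (c - v i)
      = if intVec (c - v i) ∈ coneC v ∧ intVec (vSum v J - c) ∈ interior (coneC v) then
          ξ (c - v i) (vSum v J - c) (J.erase i) else 0 := by
  rw [xiWeight, vSum_erase v hi, sub_sub_sub_cancel_right]

lemma xiWeight_erase {J : Finset (Fin n)} {i : Fin n} (hi : i ∈ J) (c : Fin r → ℤ) :
    xiWeight v ξ (J.erase i) c
      = if intVec c ∈ coneC v ∧ intVec (vSum v J - c - v i) ∈ interior (coneC v) then
          ξ c (vSum v J - c - v i) (J.erase i) else 0 := by
  rw [xiWeight, vSum_erase v hi, sub_right_comm]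

lemma relWeight_erase_eq {J : Finset (Fin n)} {a : Fin n → ℝ}
    (habs : ∀ i ∈ J, |a i| = Vol v (J.erase i)) (ha : ∑ j ∈ J, a j • vR v j = 0)
    {i k : Fin n} (hi : i ∈ J) (hk : k ∈ J) :
    relWeight v (J.erase i) k i = a k * Real.sign (a i) := by
  by_cases hvol : Vol v (J.erase i) = 0
  · simp [relWeight, hvol, abs_eq_zero.mp ((habs i hi).trans hvol)]
  rw [relWeight, ← habs i hi, Real.abs_eq_sign_mul_self]
  by_cases hik : i = k
  · subst hik
    simp only [↓reduceIte, mul_one]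
    ring
  have hk' : k ∈ J.erase i := Finset.mem_erase.mpr ⟨Ne.symm hik, hk⟩
  have hrel := congrArg (dualCoord v (J.erase i) k) ha
  rw [map_sum, map_zero, ← Finset.add_sum_erase J _ hi,
    Finset.sum_eq_single_of_mem k hk' fun j hj hjk => by
      simp [dualCoord_vR hvol hk' hj, hjk]] at hrel
  simp only [map_smul, smul_eq_mul, dualCoord_vR hvol hk' hk', ↓reduceIte, mul_one] at hrel
  rw [if_neg hik]
  linear_combination (-Real.sign (a i)) * hrel

lemma sum_relWeight_mul_xiWeight_eq_zero (hξ : XiRelation v ξ) {J : Finset (Fin n)}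
    (hJ : J.card = r + 1) {k : Fin n} (hk : k ∈ J) (c : Fin r → ℤ) :
    ∑ i ∈ J, (relWeight v (J.erase i) k i : ℂ)
      * (xiWeight v ξ (J.erase i) (c - v i) + xiWeight v ξ (J.erase i) c) = 0 := by
  obtain ⟨a, habs, ha⟩ := exists_relation_abs_eq_Vol_erase v hJ
  set d := vSum v J - c with hd
  by_cases hcd : intVec c ∈ coneC v ∧ intVec d ∈ interior (coneC v)
  case neg =>
    refine Finset.sum_eq_zero fun i hi => ?_
    rw [xiWeight_erase_sub hi, xiWeight_erase hi, if_neg, if_neg, add_zero, mul_zero]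
    · exact fun h => hcd ⟨h.1, mem_interior_coneC_of_sub_mem h.2⟩
    · exact fun h => hcd ⟨mem_coneC_of_sub_mem h.1, h.2⟩
  by_cases ha0 : ∀ i ∈ J, a i = 0
  · exact Finset.sum_eq_zero fun i hi => by simp [relWeight_erase_eq habs ha hi hk, ha0 i hi]
  push Not at ha0
  obtain ⟨i₀, hi₀, hai₀⟩ := ha0
  have hspan : Submodule.span ℝ (vR v '' (J : Set (Fin n))) = ⊤ := by
    have hvol : Vol v (J.erase i₀) ≠ 0 := habs i₀ hi₀ ▸ abs_ne_zero.mpr hai₀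
    refine eq_top_mono (Submodule.span_mono ?_) (span_range_eq_top_of_Vol_ne_zero hvol)
    rintro _ ⟨j, rfl⟩
    exact ⟨j, Finset.mem_of_mem_erase j.2, rfl⟩
  have hrel := hξ J hJ hspan a ⟨i₀, hi₀, hai₀⟩ ha c d hcd.1 hcd.2 (add_sub_cancel c _)
  calc _ = (a k : ℂ) * ∑ j ∈ J, (Real.sign (a j) : ℂ) *
        ((if intVec (c - v j) ∈ coneC v then ξ (c - v j) d (J.erase j) else 0) +
         (if intVec (d - v j) ∈ interior (coneC v) then ξ c (d - v j) (J.erase j) else 0)) := by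
        rw [Finset.mul_sum]
        refine Finset.sum_congr rfl fun i hi => ?_
        simp only [relWeight_erase_eq habs ha hi hk, xiWeight_erase_sub hi, xiWeight_erase hi,
          ← hd, hcd.1, hcd.2, and_true, true_and, Complex.ofReal_mul]
        ring
    _ = 0 := by rw [← hrel, mul_zero]

end Cancellation

section Assembly

variable {r n : ℕ} {v : Fin n → Fin r → ℤ} {deg : (Fin r → ℝ) →ₗ[ℝ] ℝ}
  {ξ : (Fin r → ℤ) → (Fin r → ℤ) → Finset (Fin n) → ℂ}

lemma sum_xiWeight_mul_leibniz_eq (hv_deg : ∀ i, deg (vR v i) = 1) {J : Finset (Fin n)}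
    (hJ : J.card = r + 1) {i : Fin n} (hi : i ∈ J) (P Q : (Fin r → ℤ) → ℂ) :
    ∑ c ∈ latticeBox v (r + 1),
        xiWeight v ξ (J.erase i) c * leibniz P Q (v i) c (vSum v (J.erase i) - c)
      = ∑ c ∈ latticeBox v (r + 1),
          (xiWeight v ξ (J.erase i) (c - v i) + xiWeight v ξ (J.erase i) c)
            * (P c * Q (vSum v J - c)) := by
  have hcard : (J.erase i).card ≤ r + 1 := by simp [Finset.card_erase_of_mem hi, hJ]
  have hshift := Finset.sum_comp_add_right_of_support_subset (T := latticeBox v (r + 1))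
    (h := fun c => xiWeight v ξ (J.erase i) (c - v i) * (P c * Q (vSum v J - c))) (v i)
    (fun c hc => by
      obtain ⟨h1, h2⟩ := mem_of_xiWeight_ne_zero (left_ne_zero_of_mul hc)
      rw [vSum_erase v hi, sub_sub_sub_cancel_right] at h2
      exact mem_latticeBox hv_deg (mem_coneC_of_sub_mem h1) (interior_subset h2) hJ.le)
    (fun c hc => mem_latticeBox hv_deg (mem_of_xiWeight_ne_zero (left_ne_zero_of_mul hc)).1
      (interior_subset (mem_of_xiWeight_ne_zero (left_ne_zero_of_mul hc)).2) hcard)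
  simp only [add_sub_cancel_right] at hshift
  simp only [leibniz, add_mul, mul_add, Finset.sum_add_distrib, ← hshift, vSum_erase v hi]
  congr 1 <;> refine Finset.sum_congr rfl fun c _ => ?_
  · rw [sub_sub, add_comm c]
  · rw [sub_right_comm, sub_add_cancel]

theorem sum_xiWeight_mul_partialTerm_eq_zero (hv_deg : ∀ i, deg (vR v i) = 1)
    (hξ : XiRelation v ξ) {x : Fin n → ℂ} {P Q : (Fin r → ℤ) → ℂ}
    (hP : EulerAt v (coneC v) x P) (hQ : EulerAt v (interior (coneC v)) x Q) (k : Fin n) :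
    ∑ I ∈ Finset.powersetCard r Finset.univ, ∑ c ∈ latticeBox v (r + 1),
      xiWeight v ξ I c * ((Vol v I : ℂ) * partialTerm v x P Q k I c (vSum v I - c)) = 0 := by
  let G : Finset (Fin n) → Fin n → ℂ := fun I i =>
    if k ∈ insert i I then (relWeight v I k i : ℂ) * (∏ j ∈ (insert i I).erase k, x j)
      * ∑ c ∈ latticeBox v (r + 1), xiWeight v ξ I c * leibniz P Q (v i) c (vSum v I - c) else 0
  have hEuler (I : Finset (Fin n)) :
      ∑ c ∈ latticeBox v (r + 1),
          xiWeight v ξ I c * ((Vol v I : ℂ) * partialTerm v x P Q k I c (vSum v I - c))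
        = ∑ i ∈ Iᶜ, G I i := by
    have hterm (c : Fin r → ℤ) :
        xiWeight v ξ I c * ((Vol v I : ℂ) * partialTerm v x P Q k I c (vSum v I - c))
          = ∑ i ∈ Iᶜ, xiWeight v ξ I c * if k ∈ insert i I then (relWeight v I k i : ℂ)
              * (∏ j ∈ (insert i I).erase k, x j) * leibniz P Q (v i) c (vSum v I - c) else 0 := by
      by_cases h : xiWeight v ξ I c = 0
      · simp [h]
      obtain ⟨hc, hd⟩ := mem_of_xiWeight_ne_zero h
      rw [Vol_mul_partialTerm_eq hP hQ k hc hd (add_sub_cancel c _), Finset.mul_sum]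
    rw [Finset.sum_congr rfl fun c _ => hterm c, Finset.sum_comm]
    refine Finset.sum_congr rfl fun i _ => ?_
    simp only [G]
    split_ifs
    · rw [Finset.mul_sum]
      exact Finset.sum_congr rfl fun c _ => by ring
    · simp
  have hsumJ (J : Finset (Fin n)) (hJ : J.card = r + 1) : ∑ i ∈ J, G (J.erase i) i = 0 := by
    by_cases hk : k ∈ J
    case neg => exact Finset.sum_eq_zero fun i hi => if_neg (by rwa [Finset.insert_erase hi])
    calc ∑ i ∈ J, G (J.erase i) i
        = (∏ j ∈ J.erase k, x j) * ∑ c ∈ latticeBox v (r + 1),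
            (∑ i ∈ J, (relWeight v (J.erase i) k i : ℂ)
              * (xiWeight v ξ (J.erase i) (c - v i) + xiWeight v ξ (J.erase i) c))
                * (P c * Q (vSum v J - c)) := by
          simp only [Finset.sum_mul, Finset.mul_sum]
          rw [Finset.sum_comm]
          refine Finset.sum_congr rfl fun i hi => ?_
          simp only [G, Finset.insert_erase hi, if_pos hk]
          rw [sum_xiWeight_mul_leibniz_eq hv_deg hJ hi, Finset.mul_sum]
          exact Finset.sum_congr rfl fun c _ => by ring
      _ = 0 := by simp [sum_relWeight_mul_xiWeight_eq_zero hξ hJ hk]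
  rw [Finset.sum_congr rfl fun I _ => hEuler I, Finset.sum_powersetCard_sum_compl]
  exact Finset.sum_eq_zero fun J hJ => hsumJ J (Finset.mem_powersetCard.mp hJ).2

end Assembly

section Analysis

variable {r n : ℕ} {v : Fin n → Fin r → ℤ} {U : Set (Fin n → ℂ)}
  {Φ Ψ : (Fin r → ℤ) → (Fin n → ℂ) → ℂ}

lemma IsSol0.eulerAt {S : Set (Fin r → ℝ)} (hΦ : IsSol0 v S U Φ) {z : Fin n → ℂ} (hz : z ∈ U) :
    EulerAt v S z (Φ · z) := fun c hc μ => by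
  simpa only [hΦ.2.1 c hc _ z hz] using hΦ.2.2 c hc μ z hz

lemma fderiv_prod_apply_single (I : Finset (Fin n)) (z : Fin n → ℂ) (k : Fin n) :
    fderiv ℂ (fun w : Fin n → ℂ => ∏ i ∈ I, w i) z (Pi.single k 1)
      = if k ∈ I then ∏ j ∈ I.erase k, z j else 0 := by
  rw [(HasFDerivAt.finsetProd fun i _ => hasFDerivAt_apply i z).fderiv]
  simp [Pi.single_apply, Finset.sum_ite_eq']

lemma hasFDerivAt_prod_mul_mul (hU : IsOpen U) (hΦ : IsSol0 v (coneC v) U Φ)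
    (hΨ : IsSol0 v (interior (coneC v)) U Ψ) {z : Fin n → ℂ} (hz : z ∈ U) (I : Finset (Fin n))
    {c d : Fin r → ℤ} (hc : intVec c ∈ coneC v) (hd : intVec d ∈ interior (coneC v)) :
    HasFDerivAt (fun w => (∏ i ∈ I, w i) * (Φ c w * Ψ d w))
      ((∏ i ∈ I, z i) • (Φ c z • fderiv ℂ (Ψ d) z + Ψ d z • fderiv ℂ (Φ c) z)
        + (Φ c z * Ψ d z) • fderiv ℂ (fun w : Fin n → ℂ => ∏ i ∈ I, w i) z) z := by
  have hΦc := ((hΦ.1 c hc z hz).differentiableAt (hU.mem_nhds hz)).hasFDerivAt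
  have hΨd := ((hΨ.1 d hd z hz).differentiableAt (hU.mem_nhds hz)).hasFDerivAt
  exact (HasFDerivAt.finsetProd fun i _ => hasFDerivAt_apply i z).differentiableAt.hasFDerivAt.mul
    (hΦc.mul hΨd)

lemma fderiv_prod_mul_mul_apply_single (hU : IsOpen U) (hΦ : IsSol0 v (coneC v) U Φ)
    (hΨ : IsSol0 v (interior (coneC v)) U Ψ) {z : Fin n → ℂ} (hz : z ∈ U) (I : Finset (Fin n))
    {c d : Fin r → ℤ} (hc : intVec c ∈ coneC v) (hd : intVec d ∈ interior (coneC v)) (k : Fin n) :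
    fderiv ℂ (fun w => (∏ i ∈ I, w i) * (Φ c w * Ψ d w)) z (Pi.single k 1)
      = partialTerm v z (Φ · z) (Ψ · z) k I c d := by
  rw [(hasFDerivAt_prod_mul_mul hU hΦ hΨ hz I hc hd).fderiv]
  simp only [add_apply, smul_apply, smul_eq_mul,
    fderiv_prod_apply_single, hΦ.2.1 c hc k z hz, hΨ.2.1 d hd k z hz, partialTerm, leibniz]
  ring

variable {ξ : (Fin r → ℤ) → (Fin r → ℤ) → Finset (Fin n) → ℂ}

lemma pairingXi_eq_sum {deg : (Fin r → ℝ) →ₗ[ℝ] ℝ} (hv_deg : ∀ i, deg (vR v i) = 1) :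
    pairingXi v ξ Φ Ψ = fun z => ∑ I ∈ Finset.powersetCard r Finset.univ,
      ∑ c ∈ latticeBox v (r + 1),
        xiWeight v ξ I c * ((Vol v I : ℂ) * ((∏ i ∈ I, z i) * (Φ c z * Ψ (vSum v I - c) z))) := by
  funext z
  refine Finset.sum_congr rfl fun I hI => ?_
  have hterm (c : Fin r → ℤ) : (if intVec c ∈ coneC v ∧ intVec (vSum v I - c) ∈ interior (coneC v)
      then ξ c (vSum v I - c) I * (Vol v I : ℂ) * (∏ i ∈ I, z i) * Φ c z * Ψ (vSum v I - c) z
      else 0) = xiWeight v ξ I c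
        * ((Vol v I : ℂ) * ((∏ i ∈ I, z i) * (Φ c z * Ψ (vSum v I - c) z))) := by
    rw [xiWeight]
    split_ifs <;> ring
  simp only [hterm]
  refine finsum_eq_sum_of_support_subset _ fun c hc => ?_
  obtain ⟨h1, h2⟩ := mem_of_xiWeight_ne_zero (left_ne_zero_of_mul hc)
  exact mem_latticeBox hv_deg h1 (interior_subset h2)
    ((Finset.mem_powersetCard.mp hI).2.trans_le (Nat.le_succ r))

lemma hasFDerivAt_xiWeight_mul (hU : IsOpen U) (hΦ : IsSol0 v (coneC v) U Φ)
    (hΨ : IsSol0 v (interior (coneC v)) U Ψ) {z : Fin n → ℂ} (hz : z ∈ U) (I : Finset (Fin n))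
    (c : Fin r → ℤ) :
    HasFDerivAt (fun w => xiWeight v ξ I c
        * ((Vol v I : ℂ) * ((∏ i ∈ I, w i) * (Φ c w * Ψ (vSum v I - c) w))))
      ((xiWeight v ξ I c * (Vol v I : ℂ)) •
        fderiv ℂ (fun w => (∏ i ∈ I, w i) * (Φ c w * Ψ (vSum v I - c) w)) z) z := by
  by_cases h : xiWeight v ξ I c = 0
  · convert hasFDerivAt_const (𝕜 := ℂ) (0 : ℂ) z using 1
    · simp [h]
    · rw [h, zero_mul]
      ext w
      simp
  obtain ⟨hc, hd⟩ := mem_of_xiWeight_ne_zero h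
  simpa only [mul_assoc] using
    ((hasFDerivAt_prod_mul_mul hU hΦ hΨ hz I hc hd).differentiableAt.hasFDerivAt.const_mul
      (xiWeight v ξ I c * (Vol v I : ℂ)))

theorem hasFDerivAt_pairingXi_zero {deg : (Fin r → ℝ) →ₗ[ℝ] ℝ}
    (hv_deg : ∀ i, deg (vR v i) = 1) (hξ : XiRelation v ξ) (hU : IsOpen U)
    (hΦ : IsSol0 v (coneC v) U Φ) (hΨ : IsSol0 v (interior (coneC v)) U Ψ)
    {z : Fin n → ℂ} (hz : z ∈ U) : HasFDerivAt (𝕜 := ℂ) (pairingXi v ξ Φ Ψ) 0 z := by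
  have hsum := HasFDerivAt.fun_sum (u := Finset.powersetCard r Finset.univ) fun I _ =>
    HasFDerivAt.fun_sum (u := latticeBox v (r + 1)) fun c _ =>
      hasFDerivAt_xiWeight_mul (ξ := ξ) hU hΦ hΨ hz I c
  rw [pairingXi_eq_sum hv_deg]
  refine hsum.congr_fderiv (ContinuousLinearMap.eq_zero_of_apply_single_one fun k => ?_)
  rw [← sum_xiWeight_mul_partialTerm_eq_zero hv_deg hξ (hΦ.eulerAt hz) (hΨ.eulerAt hz) k]
  simp only [sum_apply, smul_apply, smul_eq_mul]
  refine Finset.sum_congr rfl fun I _ => Finset.sum_congr rfl fun c _ => ?_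
  by_cases h : xiWeight v ξ I c = 0
  · simp [h]
  obtain ⟨hc, hd⟩ := mem_of_xiWeight_ne_zero h
  rw [fderiv_prod_mul_mul_apply_single hU hΦ hΨ hz I hc hd k, mul_assoc]

end Analysis

theorem statement1_general
    (r n : ℕ)
    (deg : (Fin r → ℝ) →ₗ[ℝ] ℝ)
    (v : Fin n → Fin r → ℤ)
    (hv_deg : ∀ i, deg (vR v i) = 1)
    (ξ : (Fin r → ℤ) → (Fin r → ℤ) → Finset (Fin n) → ℂ)
    (hξ : ∀ J : Finset (Fin n), J.card = r + 1 →
      Submodule.span ℝ (vR v '' (J : Set (Fin n))) = ⊤ →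
      ∀ a : Fin n → ℝ, (∃ i ∈ J, a i ≠ 0) → (∑ i ∈ J, a i • vR v i = 0) →
      ∀ c d : Fin r → ℤ, intVec c ∈ coneC v → intVec d ∈ interior (coneC v) →
        c + d = vSum v J →
        0 = ∑ j ∈ J, (Real.sign (a j) : ℂ) *
          ((if intVec (c - v j) ∈ coneC v then ξ (c - v j) d (J.erase j) else 0) +
           (if intVec (d - v j) ∈ interior (coneC v) then ξ c (d - v j) (J.erase j) else 0)))
    (U : Set (Fin n → ℂ)) (hUopen : IsOpen U) (hUconn : IsConnected U)
    (Φ Ψ : (Fin r → ℤ) → (Fin n → ℂ) → ℂ)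
    (hΦ : IsSol0 v (coneC v) U Φ)
    (hΨ : IsSol0 v (interior (coneC v)) U Ψ) :
    ∀ x ∈ U, ∀ y ∈ U, pairingXi v ξ Φ Ψ x = pairingXi v ξ Φ Ψ y := by
  have hderiv (z : Fin n → ℂ) (hz : z ∈ U) :=
    hasFDerivAt_pairingXi_zero hv_deg hξ hUopen hΦ hΨ hz
  exact fun x hx y hy => hUopen.is_const_of_fderiv_eq_zero hUconn.isPreconnected
    (fun z hz => (hderiv z hz).differentiableAt.differentiableWithinAt)
    (fun z hz => (hderiv z hz).fderiv) hx hy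

/-- sufficient condition for the pairing to be constant. -/
theorem statement1
    (r n : ℕ) (hr : 1 ≤ r) (hn : r ≤ n)
    (deg : (Fin r → ℝ) →ₗ[ℝ] ℝ)
    (hdegInt : ∀ m : Fin r → ℤ, ∃ k : ℤ, deg (intVec m) = (k : ℝ))
    (v : Fin n → Fin r → ℤ)
    (hv_inj : Function.Injective v)
    (hv_span : Submodule.span ℝ (Set.range (vR v)) = ⊤)
    (hv_deg : ∀ i, deg (vR v i) = 1)
    (ξ : (Fin r → ℤ) → (Fin r → ℤ) → Finset (Fin n) → ℂ)
    (hξ : ∀ J : Finset (Fin n), J.card = r + 1 →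
      Submodule.span ℝ (vR v '' (J : Set (Fin n))) = ⊤ →
      ∀ a : Fin n → ℝ, (∃ i ∈ J, a i ≠ 0) → (∑ i ∈ J, a i • vR v i = 0) →
      ∀ c d : Fin r → ℤ, intVec c ∈ coneC v → intVec d ∈ interior (coneC v) →
        c + d = vSum v J →
        0 = ∑ j ∈ J, (Real.sign (a j) : ℂ) *
          ((if intVec (c - v j) ∈ coneC v then ξ (c - v j) d (J.erase j) else 0) +
           (if intVec (d - v j) ∈ interior (coneC v) then ξ c (d - v j) (J.erase j) else 0)))
    (U : Set (Fin n → ℂ)) (hUopen : IsOpen U) (hUconn : IsConnected U)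
    (hU0 : ∀ x ∈ U, ∀ i, x i ≠ 0)
    (Φ Ψ : (Fin r → ℤ) → (Fin n → ℂ) → ℂ)
    (hΦ : IsSol0 v (coneC v) U Φ)
    (hΨ : IsSol0 v (interior (coneC v)) U Ψ) :
    ∀ x ∈ U, ∀ y ∈ U, pairingXi v ξ Φ Ψ x = pairingXi v ξ Φ Ψ y :=
  statement1_general r n deg v hv_deg ξ hξ U hUopen hUconn Φ Ψ hΦ hΨ

end BBGKZ
end
end
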